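/- arXiv:2605.19726 — 2 statements merged into one kernel-verified Lean document; each statement's English description precedes it below -/
import Mathlib

section
/- Let u, v be vectors in R^n with strictly positive entries, and let α = Σ u_k, β = Σ v_k. Then the normalized vectors π(u) = u/α and π(v) = v/β satisfy ‖π(u) − π(v)‖₁ ≤ (4/(α+β))·‖u − v‖₁. -/
/-!
The sums are ℓ¹ norms, and for vectors with positive entries the coordinate sums `α`, `β` are
exactly `‖u‖₁`, `‖v‖₁`; so this is an inequality between normalized vectors in any normed space.
If `‖x‖ ≤ ‖y‖`, inserting `‖y‖⁻¹ • x` gives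
`‖x/‖x‖ - y/‖y‖‖ ≤ (‖y‖ - ‖x‖)/‖y‖ + ‖x - y‖/‖y‖ ≤ 2‖x - y‖/‖y‖ ≤ 4‖x - y‖/(‖x‖ + ‖y‖)`.
-/

section InvNormSmul

variable {E : Type*} [SeminormedAddCommGroup E] [NormedSpace ℝ E]

lemma norm_inv_norm_smul_sub_inv_smul_le {x : E} {r : ℝ} (hr : 0 < r) (hx : ‖x‖ ≤ r) :
    ‖‖x‖⁻¹ • x - r⁻¹ • x‖ ≤ (r - ‖x‖) / r := by
  rcases (norm_nonneg x).eq_or_lt with hx0 | hx0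
  · simp [← hx0, norm_smul, hr.ne']
  · rw [← sub_smul, norm_smul, Real.norm_eq_abs, abs_of_nonneg (sub_nonneg.2 (inv_anti₀ hx0 hx))]
    field_simp
    rfl

lemma norm_inv_norm_smul_sub_inv_norm_smul_le_of_norm_le {x y : E} (h : ‖x‖ ≤ ‖y‖) :
    ‖‖x‖⁻¹ • x - ‖y‖⁻¹ • y‖ ≤ 2 / ‖y‖ * ‖x - y‖ := by
  rcases (norm_nonneg y).eq_or_lt with hy0 | hy
  · simp [← hy0, le_antisymm (hy0 ▸ h) (norm_nonneg x)]
  calc ‖‖x‖⁻¹ • x - ‖y‖⁻¹ • y‖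
      ≤ ‖‖x‖⁻¹ • x - ‖y‖⁻¹ • x‖ + ‖‖y‖⁻¹ • x - ‖y‖⁻¹ • y‖ := norm_sub_le_norm_sub_add_norm_sub _ _ _
    _ ≤ (‖y‖ - ‖x‖) / ‖y‖ + ‖x - y‖ / ‖y‖ := by
        gcongr
        · exact norm_inv_norm_smul_sub_inv_smul_le hy h
        · rw [← smul_sub, norm_smul, norm_inv, norm_norm, inv_mul_eq_div]
    _ ≤ ‖x - y‖ / ‖y‖ + ‖x - y‖ / ‖y‖ := by
        gcongr
        rw [norm_sub_rev]
        exact norm_sub_norm_le y x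
    _ = 2 / ‖y‖ * ‖x - y‖ := by ring

lemma norm_inv_norm_smul_sub_inv_norm_smul_le (x y : E) :
    ‖‖x‖⁻¹ • x - ‖y‖⁻¹ • y‖ ≤ 4 / (‖x‖ + ‖y‖) * ‖x - y‖ := by
  wlog h : ‖x‖ ≤ ‖y‖ generalizing x y
  · rw [norm_sub_rev, add_comm, norm_sub_rev x]
    exact this y x (le_of_not_ge h)
  rcases (norm_nonneg y).eq_or_lt with hy0 | hy
  · simp [← hy0, le_antisymm (hy0 ▸ h) (norm_nonneg x)]
  calc ‖‖x‖⁻¹ • x - ‖y‖⁻¹ • y‖ ≤ 2 / ‖y‖ * ‖x - y‖ :=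
        norm_inv_norm_smul_sub_inv_norm_smul_le_of_norm_le h
    _ ≤ 4 / (‖x‖ + ‖y‖) * ‖x - y‖ := by
        have : 2 / ‖y‖ ≤ 4 / (‖x‖ + ‖y‖) := by
          rw [div_le_div_iff₀ hy (by positivity)]
          linarith
        gcongr

end InvNormSmul

lemma PiLp.norm_toLp_one_of_nonneg {ι : Type*} [Fintype ι] {u : ι → ℝ} (hu : ∀ i, 0 ≤ u i) :
    ‖WithLp.toLp 1 u‖ = ∑ i, u i := by
  simp [PiLp.norm_eq_of_L1, abs_of_nonneg (hu _)]

theorem stmt0 (n : ℕ) (u v : Fin n → ℝ) (hu : ∀ k, 0 < u k) (hv : ∀ k, 0 < v k)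
    (α β : ℝ) (hα : α = ∑ k, u k) (hβ : β = ∑ k, v k) :
    ∑ k, |u k / α - v k / β| ≤ (4 / (α + β)) * ∑ k, |u k - v k| := by
  have hαu : ‖WithLp.toLp 1 u‖ = α := hα ▸ PiLp.norm_toLp_one_of_nonneg fun k => (hu k).le
  have hβv : ‖WithLp.toLp 1 v‖ = β := hβ ▸ PiLp.norm_toLp_one_of_nonneg fun k => (hv k).le
  have key := norm_inv_norm_smul_sub_inv_norm_smul_le (WithLp.toLp 1 u) (WithLp.toLp 1 v)
  rw [hαu, hβv, ← WithLp.toLp_smul, ← WithLp.toLp_smul, ← WithLp.toLp_sub, ← WithLp.toLp_sub,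
    PiLp.norm_eq_of_L1, PiLp.norm_eq_of_L1] at key
  simpa [div_eq_inv_mul] using key
end

section
/- Let u, v ∈ R^n have strictly positive entries with α = Σ u_k and β = Σ v_k. Then ‖u/α − v/β‖₁ ≤ 2·min(1/α, 1/β)·‖u − v‖₁. -/
lemma aux2 (n : ℕ) (u v : Fin n → ℝ) (hu : ∀ k, 0 < u k)
    (α β : ℝ) (hα : α = ∑ k, u k) (hβ : β = ∑ k, v k)
    (hαpos : 0 < α) (hβpos : 0 < β) :
    ∑ k, |u k / α - v k / β| ≤ 2 * (1 / β) * ∑ k, |u k - v k| := by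
  set S := ∑ k, |u k - v k| with hS
  have h1 : ∀ k, |u k / α - v k / β| ≤ |u k - v k| / β + u k * |1/α - 1/β| := by
    intro k
    have heq : u k / α - v k / β = (u k - v k)/β + u k * (1/α - 1/β) := by
      field_simp; ring
    rw [heq]
    calc |(u k - v k)/β + u k * (1/α - 1/β)|
        ≤ |(u k - v k)/β| + |u k * (1/α - 1/β)| := abs_add_le _ _
      _ = |u k - v k|/β + u k * |1/α - 1/β| := by
          rw [abs_div, abs_of_pos hβpos, abs_mul, abs_of_pos (hu k)]
  have h2 : ∑ k, |u k / α - v k / β| ≤ S/β + α * |1/α - 1/β| := by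
    calc ∑ k, |u k / α - v k / β|
        ≤ ∑ k, (|u k - v k|/β + u k * |1/α - 1/β|) :=
          Finset.sum_le_sum (fun k _ => h1 k)
      _ = S/β + α * |1/α - 1/β| := by
          rw [Finset.sum_add_distrib, ← Finset.sum_div, ← Finset.sum_mul, hα]
  have h3 : α * |1/α - 1/β| = |β - α| / β := by
    rw [← abs_of_pos hαpos, ← abs_mul]
    have : α * (1/α - 1/β) = (β - α)/β := by field_simp
    rw [abs_of_pos hαpos, this, abs_div, abs_of_pos hβpos]
  have h4 : |β - α| ≤ S := by
    rw [hα, hβ, ← Finset.sum_sub_distrib, hS]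
    refine (Finset.abs_sum_le_sum_abs _ _).trans (le_of_eq ?_)
    exact Finset.sum_congr rfl (fun k _ => abs_sub_comm _ _)
  have h5 : |β - α| / β ≤ S / β := by gcongr
  have h6 : 2 * (1 / β) * S = S / β + S / β := by ring
  linarith

theorem stmt2 (n : ℕ) (u v : Fin n → ℝ) (hu : ∀ k, 0 < u k) (hv : ∀ k, 0 < v k)
    (α β : ℝ) (hα : α = ∑ k, u k) (hβ : β = ∑ k, v k) :
    ∑ k, |u k / α - v k / β| ≤ 2 * min (1 / α) (1 / β) * ∑ k, |u k - v k| := by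
  rcases Nat.eq_zero_or_pos n with hn | hn
  · subst hn; simp
  have hne : (Finset.univ : Finset (Fin n)).Nonempty := by
    simpa [Finset.univ_nonempty_iff] using Fin.pos_iff_nonempty.mp hn
  have hαpos : 0 < α := hα ▸ Finset.sum_pos (fun k _ => hu k) hne
  have hβpos : 0 < β := hβ ▸ Finset.sum_pos (fun k _ => hv k) hne
  rcases le_total (1/α) (1/β) with h | h
  · rw [min_eq_left h]
    have key := aux2 n v u hv β α hβ hα hβpos hαpos
    have e1 : ∑ k, |u k / α - v k / β| = ∑ k, |v k / β - u k / α| :=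
      Finset.sum_congr rfl (fun k _ => abs_sub_comm _ _)
    have e2 : ∑ k, |v k - u k| = ∑ k, |u k - v k| :=
      Finset.sum_congr rfl (fun k _ => abs_sub_comm _ _)
    rw [e1]; rw [e2] at key; exact key
  · rw [min_eq_right h]
    exact aux2 n u v hu α β hα hβ hαpos hβpos
end
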